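/- Let A ∈ ℝ^{n×n}, let η ≥ 1 be an integer, let H = {c_h + G_h·α : α ∈ [-1,1]^p} ⊆ ℝ^n be a zonotope, and let ũ ∈ ℝ^n. For Δt > 0 define the scalar intervals I_i(Δt) = [ (i^{−i/(i−1)} − i^{−1/(i−1)})·Δt^i , 0 ] for integers i ≥ 2, the matrix sets F_x(Δt) = { Σ_{i=2}^{η} τ_i·A^i/i! + R : τ_i ∈ I_i(Δt), |R| ≤ E(Δt,η) entrywise } and F_u(Δt) = { Σ_{i=2}^{η+1} τ_i·A^{i−1}/i! + R·Δt : τ_i ∈ I_i(Δt), |R| ≤ E(Δt,η) entrywise }, and the curvature enclosure set C(Δt) = { M·x + N·ũ : M ∈ F_x(Δt), N ∈ F_u(Δt), x ∈ H }. Define ε_hom(Δt) = 2·err(C(Δt)) + √p·‖(e^{A·Δt} − I)·G_h‖₂, where ‖·‖₂ is the spectral norm. Then ε_hom(Δt) → 0 as Δt → 0⁺ and ε_hom(Δt) = O(Δt) as Δt → 0⁺, i.e., there exist constants c > 0 and δ > 0 with ε_hom(Δt) ≤ c·Δt for all Δt ∈ (0,δ). -/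

import Mathlib

open scoped Pointwise

/-- Matrix exponential. -/
noncomputable def mexp {n : ℕ} (A : Matrix (Fin n) (Fin n) ℝ) : Matrix (Fin n) (Fin n) ℝ :=
  NormedSpace.exp A

/-- Matrix-vector multiplication on Euclidean space. -/
noncomputable def mvE {m n : ℕ} (M : Matrix (Fin m) (Fin n) ℝ)
    (x : EuclideanSpace ℝ (Fin n)) : EuclideanSpace ℝ (Fin m) :=
  Matrix.toEuclideanLin M x

/-- Image of a set under a matrix: M·S = {M·s : s ∈ S}. -/
noncomputable def imgM {m n : ℕ} (M : Matrix (Fin m) (Fin n) ℝ)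
    (S : Set (EuclideanSpace ℝ (Fin n))) : Set (EuclideanSpace ℝ (Fin m)) :=
  mvE M '' S

/-- Zonotope with center `c` and generator matrix `G`. -/
noncomputable def zono {n p : ℕ} (c : EuclideanSpace ℝ (Fin n))
    (G : Matrix (Fin n) (Fin p) ℝ) : Set (EuclideanSpace ℝ (Fin n)) :=
  {x | ∃ α : EuclideanSpace ℝ (Fin p), (∀ i, α i ∈ Set.Icc (-1 : ℝ) 1) ∧ x = c + mvE G α}

/-- Linear combination of two sets. -/
def linComb {n : ℕ} (S1 S2 : Set (EuclideanSpace ℝ (Fin n))) :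
    Set (EuclideanSpace ℝ (Fin n)) :=
  {x | ∃ s1 ∈ S1, ∃ s2 ∈ S2, ∃ lam ∈ Set.Icc (0 : ℝ) 1, x = lam • s1 + (1 - lam) • s2}

/-- Tightest axis-aligned interval enclosure of a set. -/
noncomputable def box {n : ℕ} (S : Set (EuclideanSpace ℝ (Fin n))) :
    Set (EuclideanSpace ℝ (Fin n)) :=
  {x | ∀ i, x i ∈ Set.Icc (sInf ((fun y => y i) '' S)) (sSup ((fun y => y i) '' S))}

/-- Radius of the smallest origin-centered enclosing hypersphere. -/
noncomputable def rad {n : ℕ} (S : Set (EuclideanSpace ℝ (Fin n))) : ℝ :=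
  sSup ((fun x => ‖x‖) '' S)

/-- err(S) = rad(box(S)). -/
noncomputable def err {n : ℕ} (S : Set (EuclideanSpace ℝ (Fin n))) : ℝ := rad (box S)

/-- Spectral norm (operator 2-norm) of a matrix. -/
noncomputable def specNorm {m n : ℕ} (M : Matrix (Fin m) (Fin n) ℝ) : ℝ :=
  ‖LinearMap.toContinuousLinearMap (Matrix.toEuclideanLin M)‖

/-- Particular solution set P_U(t). -/
noncomputable def PU {n : ℕ} (U0 : Set (EuclideanSpace ℝ (Fin n)))
    (A : Matrix (Fin n) (Fin n) ℝ) (t : ℝ) : Set (EuclideanSpace ℝ (Fin n)) :=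
  {x | ∃ u : ℝ → EuclideanSpace ℝ (Fin n), Measurable u ∧ (∀ θ ∈ Set.Icc 0 t, u θ ∈ U0) ∧
    x = ∫ θ in (0 : ℝ)..t, mvE (mexp ((t - θ) • A)) (u θ)}

/-- Entrywise integral ∫₀^t e^{A·σ} dσ of the matrix exponential. -/
noncomputable def intExp {n : ℕ} (A : Matrix (Fin n) (Fin n) ℝ) (t : ℝ) :
    Matrix (Fin n) (Fin n) ℝ :=
  Matrix.of fun i j => ∫ σ in (0 : ℝ)..t, mexp (σ • A) i j

/-- Entrywise absolute value of a matrix. -/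
def entAbs {m n : ℕ} (M : Matrix (Fin m) (Fin n) ℝ) : Matrix (Fin m) (Fin n) ℝ :=
  Matrix.of fun i j => |M i j|

/-- Exponential remainder matrix E(Δt,η). -/
noncomputable def Eexp {n : ℕ} (A : Matrix (Fin n) (Fin n) ℝ) (dt : ℝ) (η : ℕ) :
    Matrix (Fin n) (Fin n) ℝ :=
  mexp (dt • entAbs A) -
    ∑ i ∈ Finset.range (η + 1), ((Nat.factorial i : ℝ)⁻¹) • (dt • entAbs A) ^ i

/-- Ã_i = A^i·Δt^{i+1}/(i+1)!. -/
noncomputable def Atilde {n : ℕ} (A : Matrix (Fin n) (Fin n) ℝ) (dt : ℝ) (i : ℕ) :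
    Matrix (Fin n) (Fin n) ℝ :=
  (dt ^ (i + 1) / (Nat.factorial (i + 1) : ℝ)) • A ^ i

/-- D(Δt) = {Δt·M·u : |M| ≤ E(Δt,η) entrywise, u ∈ U₀}. -/
noncomputable def Dset {n : ℕ} (A : Matrix (Fin n) (Fin n) ℝ) (dt : ℝ) (η : ℕ)
    (U0 : Set (EuclideanSpace ℝ (Fin n))) : Set (EuclideanSpace ℝ (Fin n)) :=
  {x | ∃ M : Matrix (Fin n) (Fin n) ℝ, (∀ i j, |M i j| ≤ Eexp A dt η i j) ∧
    ∃ u ∈ U0, x = dt • mvE M u}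

/-- P̂(Δt) = Ã_0·U₀ ⊕ … ⊕ Ã_η·U₀ ⊕ D(Δt). -/
noncomputable def PhatSet {n : ℕ} (A : Matrix (Fin n) (Fin n) ℝ) (dt : ℝ) (η : ℕ)
    (U0 : Set (EuclideanSpace ℝ (Fin n))) : Set (EuclideanSpace ℝ (Fin n)) :=
  (∑ i ∈ Finset.range (η + 1), imgM (Atilde A dt i) U0) + Dset A dt η U0

/-- One-step accumulating error bound ε̂(Δt). -/
noncomputable def ehatStep {n : ℕ} (A : Matrix (Fin n) (Fin n) ℝ) (t : ℝ) (η : ℕ)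
    (U0 : Set (EuclideanSpace ℝ (Fin n))) (dt : ℝ) : ℝ :=
  err (imgM (mexp (t • A)) (imgM (∑ i ∈ Finset.Icc 1 η, Atilde A dt i) U0 + Dset A dt η U0)) +
  err (imgM (mexp (t • A)) ((∑ i ∈ Finset.Icc 1 η, imgM (Atilde A dt i) U0) + Dset A dt η U0))

/-- Scalar interval I_i(Δt). -/
noncomputable def Iint (i : ℕ) (dt : ℝ) : Set ℝ :=
  Set.Icc (((i : ℝ) ^ (-(i : ℝ) / ((i : ℝ) - 1)) - (i : ℝ) ^ (-(1 : ℝ) / ((i : ℝ) - 1))) * dt ^ i) 0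

/-- Interval matrix F_x(Δt). -/
noncomputable def Fx {n : ℕ} (A : Matrix (Fin n) (Fin n) ℝ) (η : ℕ) (dt : ℝ) :
    Set (Matrix (Fin n) (Fin n) ℝ) :=
  {M | ∃ τ : ℕ → ℝ, (∀ i ∈ Finset.Icc 2 η, τ i ∈ Iint i dt) ∧
    ∃ R : Matrix (Fin n) (Fin n) ℝ, (∀ i j, |R i j| ≤ Eexp A dt η i j) ∧
    M = (∑ i ∈ Finset.Icc 2 η, (τ i / (Nat.factorial i : ℝ)) • A ^ i) + R}

/-- Interval matrix F_u(Δt). -/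
noncomputable def Fu {n : ℕ} (A : Matrix (Fin n) (Fin n) ℝ) (η : ℕ) (dt : ℝ) :
    Set (Matrix (Fin n) (Fin n) ℝ) :=
  {N | ∃ τ : ℕ → ℝ, (∀ i ∈ Finset.Icc 2 (η + 1), τ i ∈ Iint i dt) ∧
    ∃ R : Matrix (Fin n) (Fin n) ℝ, (∀ i j, |R i j| ≤ Eexp A dt η i j) ∧
    N = (∑ i ∈ Finset.Icc 2 (η + 1), (τ i / (Nat.factorial i : ℝ)) • A ^ (i - 1)) + dt • R}

/-- Curvature enclosure set C(Δt). -/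
noncomputable def Cset {n p : ℕ} (A : Matrix (Fin n) (Fin n) ℝ) (η : ℕ) (dt : ℝ)
    (ch : EuclideanSpace ℝ (Fin n)) (Gh : Matrix (Fin n) (Fin p) ℝ)
    (utld : EuclideanSpace ℝ (Fin n)) : Set (EuclideanSpace ℝ (Fin n)) :=
  {y | ∃ M ∈ Fx A η dt, ∃ N ∈ Fu A η dt, ∃ x ∈ zono ch Gh, y = mvE M x + mvE N utld}

/-- ε_hom(Δt). -/
noncomputable def ehom {n p : ℕ} (A : Matrix (Fin n) (Fin n) ℝ) (η : ℕ)
    (ch : EuclideanSpace ℝ (Fin n)) (Gh : Matrix (Fin n) (Fin p) ℝ)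
    (utld : EuclideanSpace ℝ (Fin n)) (dt : ℝ) : ℝ :=
  2 * err (Cset A η dt ch Gh utld) + Real.sqrt p * specNorm ((mexp (dt • A) - 1) * Gh)

/-- ε_U(Δt) = err(e^{A·t}·P̂(Δt)). -/
noncomputable def errPhat {n : ℕ} (A : Matrix (Fin n) (Fin n) ℝ) (t : ℝ) (η : ℕ)
    (U0 : Set (EuclideanSpace ℝ (Fin n))) (dt : ℝ) : ℝ :=
  err (imgM (mexp (t • A)) (PhatSet A dt η U0))

/-!
All matrix norms below are Frobenius norms: the Frobenius norm dominates the spectral norm and is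
monotone in the absolute values of the entries, so an entrywise bound `|R| ≤ E(Δt,η)` gives
`‖R‖ ≤ ‖E(Δt,η)‖`. The maps `Δt ↦ E(Δt,η)` and `Δt ↦ e^{AΔt} - I` are differentiable and vanish
at `Δt = 0`, hence are `O(Δt)`, and the interval coefficients satisfy `|τ_i| = O(Δt^i)` with
`i ≥ 2`. So every matrix of `F_x(Δt)` and `F_u(Δt)` has norm `O(Δt)`, uniformly; since the zonotope
is bounded, every point of `C(Δt)` has norm `O(Δt)`, and its box is then `O(Δt)` as well, with an
extra factor `√n`. Being nonnegative and `O(Δt)`, `ε_hom` also tends to `0`.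
-/

open scoped Matrix Matrix.Norms.Frobenius Nat
open Asymptotics Filter Topology Set Finset

section MatrixNorm

variable {m n : ℕ}

theorem norm_mvE_le (M : Matrix (Fin m) (Fin n) ℝ) (x : EuclideanSpace ℝ (Fin n)) :
    ‖mvE M x‖ ≤ ‖M‖ * ‖x‖ := by
  calc ‖mvE M x‖ = ‖Matrix.replicateCol (Fin 1) (M *ᵥ x.ofLp)‖ :=
        (Matrix.frobenius_norm_replicateCol _).symm
    _ = ‖M * Matrix.replicateCol (Fin 1) x.ofLp‖ := by rw [Matrix.replicateCol_mulVec]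
    _ ≤ ‖M‖ * ‖Matrix.replicateCol (Fin 1) x.ofLp‖ := Matrix.frobenius_norm_mul _ _
    _ = ‖M‖ * ‖x‖ := congrArg (‖M‖ * ·) (Matrix.frobenius_norm_replicateCol _)

theorem specNorm_le_norm (M : Matrix (Fin m) (Fin n) ℝ) : specNorm M ≤ ‖M‖ :=
  ContinuousLinearMap.opNorm_le_bound _ (norm_nonneg M) (norm_mvE_le M)

theorem norm_le_norm_of_abs_le {ι κ : Type*} [Fintype ι] [Fintype κ] {M E : Matrix ι κ ℝ}
    (h : ∀ i j, |M i j| ≤ E i j) : ‖M‖ ≤ ‖E‖ := by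
  simp only [Matrix.frobenius_norm_def, Real.norm_eq_abs]
  refine Real.rpow_le_rpow (by positivity)
    (Finset.sum_le_sum fun i _ => Finset.sum_le_sum fun j _ => ?_) (by norm_num)
  exact Real.rpow_le_rpow (abs_nonneg _) ((h i j).trans (le_abs_self _)) (by norm_num)

end MatrixNorm

theorem norm_le_sqrt_card_mul {n : ℕ} {z : EuclideanSpace ℝ (Fin n)} {r : ℝ} (hr : 0 ≤ r)
    (hz : ∀ i, |z i| ≤ r) : ‖z‖ ≤ √n * r := by
  rw [EuclideanSpace.norm_eq, ← Real.sqrt_sq hr, ← Real.sqrt_mul (Nat.cast_nonneg n)]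
  gcongr
  calc ∑ i, ‖z i‖ ^ 2 ≤ ∑ _i : Fin n, r ^ 2 := by
        gcongr with i; exact hz i
    _ = n * r ^ 2 := by simp

theorem err_nonneg {n : ℕ} (S : Set (EuclideanSpace ℝ (Fin n))) : 0 ≤ err S :=
  Real.sSup_nonneg (by rintro _ ⟨y, -, rfl⟩; exact norm_nonneg y)

theorem err_le_of_forall_norm_le {n : ℕ} {S : Set (EuclideanSpace ℝ (Fin n))} {r : ℝ}
    (hr : 0 ≤ r) (hS : ∀ y ∈ S, ‖y‖ ≤ r) : err S ≤ √n * r := by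
  have hcoord : ∀ i, ∀ y ∈ S, |y i| ≤ r := fun i y hy =>
    (PiLp.norm_apply_le y i).trans (hS y hy)
  refine Real.sSup_le ?_ (by positivity)
  rintro _ ⟨z, hz, rfl⟩
  refine norm_le_sqrt_card_mul hr fun i => abs_le.mpr ⟨?_, ?_⟩
  · refine le_trans ?_ (hz i).1
    refine Real.le_sInf ?_ (by linarith)
    rintro _ ⟨y, hy, rfl⟩
    exact (abs_le.mp (hcoord i y hy)).1
  · refine (hz i).2.trans (Real.sSup_le ?_ hr)
    rintro _ ⟨y, hy, rfl⟩
    exact (abs_le.mp (hcoord i y hy)).2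

theorem norm_le_of_mem_zono {n p : ℕ} {c x : EuclideanSpace ℝ (Fin n)}
    {G : Matrix (Fin n) (Fin p) ℝ} (hx : x ∈ zono c G) : ‖x‖ ≤ ‖c‖ + ‖G‖ * √p := by
  obtain ⟨α, hα, rfl⟩ := hx
  have hα' : ‖α‖ ≤ √p * 1 := norm_le_sqrt_card_mul zero_le_one fun i => abs_le.mpr (hα i)
  calc ‖c + mvE G α‖ ≤ ‖c‖ + ‖G‖ * ‖α‖ :=
        (norm_add_le _ _).trans (by gcongr; exact norm_mvE_le G α)
    _ ≤ ‖c‖ + ‖G‖ * √p := by gcongr; simpa using hα'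

noncomputable def iintCoeff (i : ℕ) : ℝ :=
  (i : ℝ) ^ (-(i : ℝ) / ((i : ℝ) - 1)) - (i : ℝ) ^ (-(1 : ℝ) / ((i : ℝ) - 1))

theorem abs_le_of_mem_Iint {i : ℕ} {dt τ : ℝ} (hdt : 0 ≤ dt) (hτ : τ ∈ Iint i dt) :
    |τ| ≤ |iintCoeff i| * dt ^ i := by
  rw [← abs_of_nonneg (pow_nonneg hdt i), ← abs_mul]
  exact abs_le_abs_of_nonpos hτ.2 hτ.1

theorem isBigO_id_of_differentiableAt_of_eq_zero {E : Type*} [NormedAddCommGroup E]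
    [NormedSpace ℝ E] {f : ℝ → E} (hf : DifferentiableAt ℝ f 0) (hf0 : f 0 = 0) :
    f =O[𝓝 0] fun t => t := by
  simpa [hf0] using hf.hasDerivAt.isBigO_sub

theorem isBigO_pow_id {i : ℕ} (hi : 1 ≤ i) : (fun t : ℝ => t ^ i) =O[𝓝 0] fun t => t := by
  rcases hi.eq_or_lt with rfl | hi
  · simpa using isBigO_refl (fun t : ℝ => t) _
  · exact (isLittleO_pow_id hi).isBigO

theorem isBigO_sum_mul_pow {s : Finset ℕ} (hs : ∀ i ∈ s, 1 ≤ i) (c : ℕ → ℝ) :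
    (fun t : ℝ => ∑ i ∈ s, c i * t ^ i) =O[𝓝 0] fun t => t :=
  IsBigO.fun_sum fun i hi => (isBigO_pow_id (hs i hi)).const_mul_left (c i)

theorem differentiableAt_mexp_smul {n : ℕ} (B : Matrix (Fin n) (Fin n) ℝ) (t : ℝ) :
    DifferentiableAt ℝ (fun s : ℝ => mexp (s • B)) t := by
  unfold mexp
  exact (hasDerivAt_exp_smul_const' B t).differentiableAt

theorem isBigO_mexp_smul_sub_one {n : ℕ} (A : Matrix (Fin n) (Fin n) ℝ) :
    (fun t : ℝ => mexp (t • A) - 1) =O[𝓝 0] fun t => t :=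
  isBigO_id_of_differentiableAt_of_eq_zero ((differentiableAt_mexp_smul A 0).sub_const 1)
    (by simp [mexp])

theorem isBigO_Eexp {n : ℕ} (A : Matrix (Fin n) (Fin n) ℝ) (η : ℕ) :
    (fun t => Eexp A t η) =O[𝓝 0] fun t => t := by
  refine isBigO_id_of_differentiableAt_of_eq_zero ?_ ?_
  · unfold Eexp
    have hexp := differentiableAt_mexp_smul (entAbs A) 0
    fun_prop
  · simp [Eexp, mexp, Finset.sum_range_succ']

section Curvature

variable {n : ℕ} (A : Matrix (Fin n) (Fin n) ℝ) (η : ℕ)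

theorem norm_sum_smul_le_of_mem_Iint {E : Type*} [SeminormedAddCommGroup E] [NormedSpace ℝ E]
    {s : Finset ℕ} {τ : ℕ → ℝ} {dt : ℝ} (hdt : 0 ≤ dt) (hτ : ∀ i ∈ s, τ i ∈ Iint i dt)
    (P : ℕ → E) :
    ‖∑ i ∈ s, (τ i / i !) • P i‖ ≤ ∑ i ∈ s, |iintCoeff i| * ‖P i‖ / i ! * dt ^ i := by
  refine (norm_sum_le _ _).trans (Finset.sum_le_sum fun i hi => ?_)
  rw [norm_smul, Real.norm_eq_abs, abs_div, Nat.abs_cast]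
  calc |τ i| / i ! * ‖P i‖ ≤ |iintCoeff i| * dt ^ i / i ! * ‖P i‖ := by
        gcongr; exact abs_le_of_mem_Iint hdt (hτ i hi)
    _ = |iintCoeff i| * ‖P i‖ / i ! * dt ^ i := by ring

noncomputable def fxBound (dt : ℝ) : ℝ :=
  ∑ i ∈ Icc 2 η, |iintCoeff i| * ‖A ^ i‖ / i ! * dt ^ i + ‖Eexp A dt η‖

noncomputable def fuBound (dt : ℝ) : ℝ :=
  ∑ i ∈ Icc 2 (η + 1), |iintCoeff i| * ‖A ^ (i - 1)‖ / i ! * dt ^ i + dt * ‖Eexp A dt η‖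

variable {A η}

theorem norm_le_fxBound {dt : ℝ} (hdt : 0 ≤ dt) {M : Matrix (Fin n) (Fin n) ℝ}
    (hM : M ∈ Fx A η dt) : ‖M‖ ≤ fxBound A η dt := by
  obtain ⟨τ, hτ, R, hR, rfl⟩ := hM
  exact (norm_add_le _ _).trans
    (add_le_add (norm_sum_smul_le_of_mem_Iint hdt hτ _) (norm_le_norm_of_abs_le hR))

theorem norm_le_fuBound {dt : ℝ} (hdt : 0 ≤ dt) {N : Matrix (Fin n) (Fin n) ℝ}
    (hN : N ∈ Fu A η dt) : ‖N‖ ≤ fuBound A η dt := by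
  obtain ⟨τ, hτ, R, hR, rfl⟩ := hN
  refine (norm_add_le _ _).trans (add_le_add (norm_sum_smul_le_of_mem_Iint hdt hτ _) ?_)
  rw [norm_smul, Real.norm_of_nonneg hdt]
  exact mul_le_mul_of_nonneg_left (norm_le_norm_of_abs_le hR) hdt

theorem norm_le_of_mem_Cset {p : ℕ} {ch utld : EuclideanSpace ℝ (Fin n)}
    {Gh : Matrix (Fin n) (Fin p) ℝ} {dt : ℝ} (hdt : 0 ≤ dt) {y : EuclideanSpace ℝ (Fin n)}
    (hy : y ∈ Cset A η dt ch Gh utld) :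
    ‖y‖ ≤ (‖ch‖ + ‖Gh‖ * √p) * fxBound A η dt + ‖utld‖ * fuBound A η dt := by
  obtain ⟨M, hM, N, hN, x, hx, rfl⟩ := hy
  calc ‖mvE M x + mvE N utld‖ ≤ ‖x‖ * ‖M‖ + ‖utld‖ * ‖N‖ := by
        rw [mul_comm ‖x‖, mul_comm ‖utld‖]
        exact (norm_add_le _ _).trans (add_le_add (norm_mvE_le M x) (norm_mvE_le N utld))
    _ ≤ _ := add_le_add
        (mul_le_mul (norm_le_of_mem_zono hx) (norm_le_fxBound hdt hM) (norm_nonneg M)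
          (by positivity))
        (mul_le_mul_of_nonneg_left (norm_le_fuBound hdt hN) (norm_nonneg utld))

variable (A η)

theorem isBigO_fxBound : fxBound A η =O[𝓝 0] fun t => t :=
  (isBigO_sum_mul_pow (fun i hi => by linarith [(Finset.mem_Icc.mp hi).1]) _).add
    (isBigO_Eexp A η).norm_left

theorem isBigO_fuBound : fuBound A η =O[𝓝 0] fun t => t := by
  have hbdd : (fun t : ℝ => t) =O[𝓝 0] fun _ => (1 : ℝ) :=
    (tendsto_id (x := 𝓝 (0 : ℝ))).isBigO_one ℝ
  have hE : (fun t => t * ‖Eexp A t η‖) =O[𝓝 0] fun t => t * 1 :=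
    (isBigO_refl _ _).mul ((isBigO_Eexp A η).norm_left.trans hbdd)
  exact (isBigO_sum_mul_pow (fun i hi => by linarith [(Finset.mem_Icc.mp hi).1]) _).add
    (by simpa using hE)

end Curvature

theorem tendsto_and_le_mul_of_isBigO {f : ℝ → ℝ} (hf : f =O[𝓝[>] 0] fun t => t) :
    Tendsto f (𝓝[>] 0) (𝓝 0) ∧ ∃ c > (0 : ℝ), ∃ δ > (0 : ℝ), ∀ t ∈ Ioo 0 δ, f t ≤ c * t := by
  refine ⟨hf.trans_tendsto (tendsto_id.mono_left nhdsWithin_le_nhds), ?_⟩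
  obtain ⟨c, hc, hfc⟩ := hf.exists_pos
  obtain ⟨δ, hδ, hsub⟩ := mem_nhdsGT_iff_exists_Ioo_subset.mp hfc.bound
  refine ⟨c, hc, δ, hδ, fun t ht => ?_⟩
  have := hsub ht
  simp only [mem_ofPred_eq, Real.norm_eq_abs, abs_of_pos ht.1] at this
  exact (le_abs_self _).trans this

theorem ehom_limit_and_order_general {n p : ℕ} (A : Matrix (Fin n) (Fin n) ℝ)
    (η : ℕ) (ch : EuclideanSpace ℝ (Fin n))
    (Gh : Matrix (Fin n) (Fin p) ℝ) (utld : EuclideanSpace ℝ (Fin n)) :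
    Filter.Tendsto (fun dt => ehom A η ch Gh utld dt)
      (nhdsWithin 0 (Set.Ioi 0)) (nhds 0) ∧
    ∃ c > (0 : ℝ), ∃ δ > (0 : ℝ), ∀ dt ∈ Set.Ioo (0 : ℝ) δ,
      ehom A η ch Gh utld dt ≤ c * dt := by
  have hβ : (fun dt => (‖ch‖ + ‖Gh‖ * √p) * fxBound A η dt + ‖utld‖ * fuBound A η dt)
      =O[𝓝 0] fun t => t :=
    ((isBigO_fxBound A η).const_mul_left _).add ((isBigO_fuBound A η).const_mul_left _)
  have herr : (fun dt => err (Cset A η dt ch Gh utld)) =O[𝓝[>] 0] fun t => t := by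
    refine (IsBigO.of_bound √n ?_).trans (hβ.mono nhdsWithin_le_nhds)
    filter_upwards [self_mem_nhdsWithin] with dt hdt
    rw [Real.norm_of_nonneg (err_nonneg _), Real.norm_eq_abs]
    exact err_le_of_forall_norm_le (abs_nonneg _)
      fun y hy => (norm_le_of_mem_Cset (le_of_lt hdt) hy).trans (le_abs_self _)
  have hspec : (fun dt => specNorm ((mexp (dt • A) - 1) * Gh)) =O[𝓝[>] 0] fun t : ℝ => t := by
    refine (IsBigO.of_bound ‖Gh‖ (Eventually.of_forall fun dt => ?_)).trans
      ((isBigO_mexp_smul_sub_one A).norm_left.mono nhdsWithin_le_nhds)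
    simp only [specNorm, norm_norm]
    rw [mul_comm]
    exact (specNorm_le_norm _).trans (Matrix.frobenius_norm_mul _ _)
  exact tendsto_and_le_mul_of_isBigO ((herr.const_mul_left 2).add (hspec.const_mul_left √p))

/-- the homogeneous error `ε_hom(Δt)` tends to 0 and is `O(Δt)`. -/
theorem ehom_limit_and_order {n p : ℕ} (A : Matrix (Fin n) (Fin n) ℝ)
    (η : ℕ) (hη : 1 ≤ η) (ch : EuclideanSpace ℝ (Fin n))
    (Gh : Matrix (Fin n) (Fin p) ℝ) (utld : EuclideanSpace ℝ (Fin n)) :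
    Filter.Tendsto (fun dt => ehom A η ch Gh utld dt)
      (nhdsWithin 0 (Set.Ioi 0)) (nhds 0) ∧
    ∃ c > (0 : ℝ), ∃ δ > (0 : ℝ), ∀ dt ∈ Set.Ioo (0 : ℝ) δ,
      ehom A η ch Gh utld dt ≤ c * dt :=
  ehom_limit_and_order_general A η ch Gh utld
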